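/- If a well-formed λυ′-term a is a normal form with respect to υ′ (the system without Beta), then a contains no substitutions of the forms b/, id, or ⇑s. -/

import Mathlib

abbrev Var := ℕ

mutual
/-- Terms of the calculus λυ′: named variables, De Bruijn index 1,
application, abstraction, and explicit substitution `a[s]`. -/
inductive UTm : Type
  | fvar : Var → UTm
  | one : UTm
  | app : UTm → UTm → UTm
  | lam : UTm → UTm
  | sub : UTm → USb → UTm
/-- Substitutions of λυ′: `b/`, `↑`, `id`, `⇑s`. -/
inductive USb : Type
  | slash : UTm → USb
  | up : USb
  | id : USb
  | lift : USb → USb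
end

mutual
/-- One-step υ′-reduction (λυ′ without Beta), closed under compatible contexts. -/
inductive UStep : UTm → UTm → Prop
  | app {a b s} : UStep (.sub (.app a b) s) (.app (.sub a s) (.sub b s))
  | lam {a s} : UStep (.sub (.lam a) s) (.lam (.sub a (.lift s)))
  | var {b} : UStep (.sub .one (.slash b)) b
  | shift {a b} : UStep (.sub (.sub a .up) (.slash b)) a
  | varId : UStep (.sub .one .id) .one
  | shiftId {a} : UStep (.sub (.sub a .up) .id) (.sub a .up)
  | varLift {s} : UStep (.sub .one (.lift s)) .one
  | shiftLift {a s} : UStep (.sub (.sub a .up) (.lift s)) (.sub (.sub a s) .up)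
  | appL {a a' b} : UStep a a' → UStep (.app a b) (.app a' b)
  | appR {a b b'} : UStep b b' → UStep (.app a b) (.app a b')
  | lamC {a a'} : UStep a a' → UStep (.lam a) (.lam a')
  | subL {a a' s} : UStep a a' → UStep (.sub a s) (.sub a' s)
  | subR {a : UTm} {s s'} : USStep s s' → UStep (.sub a s) (.sub a s')
/-- One-step υ′-reduction inside substitutions. -/
inductive USStep : USb → USb → Prop
  | slash {b b'} : UStep b b' → USStep (.slash b) (.slash b')
  | lift {s s' : USb} : USStep s s' → USStep (.lift s) (.lift s')
end

mutual
/-- The typing judgement `n ⊢ a` of λυ′. -/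
inductive UJ : ℕ → UTm → Prop
  | fvar (x : Var) : UJ 0 (.fvar x)
  | one (n : ℕ) : UJ (n + 1) .one
  | app {n a b} : UJ n a → UJ n b → UJ n (.app a b)
  | lam {n a} : UJ (n + 1) a → UJ n (.lam a)
  | sub {n m s a} : USJ n s m → UJ m a → UJ n (.sub a s)
/-- The judgement `n ⊢ s ▷ m` of λυ′. -/
inductive USJ : ℕ → USb → ℕ → Prop
  | slash {n b} : UJ n b → USJ n (.slash b) (n + 1)
  | up (n : ℕ) : USJ (n + 1) .up n
  | id (n : ℕ) : USJ (n + 1) .id (n + 1)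
  | lift {n m s} : USJ n s m → USJ (n + 1) (.lift s) (m + 1)
end

/-- A substitution is harmless iff it is `↑`. -/
def goodS : USb → Bool
  | .up => true
  | _ => false

/-- A term contains no substitutions of the forms `b/`, `id`, `⇑s`. -/
def goodT : UTm → Bool
  | .fvar _ => true
  | .one => true
  | .app a b => goodT a && goodT b
  | .lam a => goodT a
  | .sub a s => goodT a && goodS s

/-! In a closure `a[s]` whose body `a` is already free of bad substitutions, `a` is `x`, `1`, or
`a'[↑]` (applications and abstractions are redexes). For `1` and `a'[↑]` every `s` other than `↑`
gives a redex, and for a variable the typing `0 ⊢ x` forces `n ⊢ s ▷ 0`, which only `↑` satisfies.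
Induction on the typing derivation then covers all subterms. -/

theorem goodS_iff_eq_up {s : USb} : goodS s = true ↔ s = .up := by
  cases s <;> simp [goodS]

theorem USJ.eq_up_of_codomain_zero {n : ℕ} {s : USb} (hs : USJ n s 0) : s = .up := by
  cases hs
  rfl

theorem goodS_of_normal_sub {n m : ℕ} {a : UTm} {s : USb} (hs : USJ n s m) (ha : UJ m a)
    (hgood : goodT a = true) (hnf : ∀ b, ¬ UStep (.sub a s) b) : goodS s = true := by
  cases a with
  | fvar x =>
    cases ha
    exact goodS_iff_eq_up.2 hs.eq_up_of_codomain_zero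
  | one =>
    cases s with
    | up => rfl
    | slash b => exact absurd .var (hnf _)
    | id => exact absurd .varId (hnf _)
    | lift t => exact absurd .varLift (hnf _)
  | app a b => exact absurd .app (hnf _)
  | lam a => exact absurd .lam (hnf _)
  | sub a t =>
    simp only [goodT, Bool.and_eq_true] at hgood
    obtain rfl := goodS_iff_eq_up.1 hgood.2
    cases s with
    | up => rfl
    | slash b => exact absurd .shift (hnf _)
    | id => exact absurd .shiftId (hnf _)
    | lift s => exact absurd .shiftLift (hnf _)

theorem goodT_of_normal {n : ℕ} {a : UTm} :
    UJ n a → (∀ b, ¬ UStep a b) → goodT a = true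
  | .fvar _, _ => rfl
  | .one _, _ => rfl
  | .app ha hb, hnf => by
    simp only [goodT, Bool.and_eq_true]
    exact ⟨goodT_of_normal ha fun _ h => hnf _ (.appL h),
      goodT_of_normal hb fun _ h => hnf _ (.appR h)⟩
  | .lam ha, hnf => by
    rw [goodT]
    exact goodT_of_normal ha fun _ h => hnf _ (.lamC h)
  | .sub hs ha, hnf => by
    have hgood := goodT_of_normal ha fun _ h => hnf _ (.subL h)
    simp only [goodT, Bool.and_eq_true]
    exact ⟨hgood, goodS_of_normal_sub hs ha hgood hnf⟩

/-- A well-formed υ′-normal form contains no substitutions of the forms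
`b/`, `id`, or `⇑s`. -/
theorem upsilon'_nf_no_bad_subst (a : UTm) (hwf : ∃ n, UJ n a)
    (hnf : ∀ b, ¬ UStep a b) : goodT a = true := by
  obtain ⟨n, hj⟩ := hwf
  exact goodT_of_normal hj hnf
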